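/- Let α > 0, h > 0, and let i, j be natural numbers with j ≥ i+1, and set k = j − i. Let T_i be the i-th right-handed triangular function of step h. Then the increment of the Riemann–Liouville fractional integral of order α of T_i between consecutive grid nodes satisfies J^α T_i((j+1)·h) − J^α T_i(j·h) = (h^α / Γ(α+2)) · ((k+1)^{α+1} − (k+1+α)·k^α − k^{α+1} + (k+α)·(k−1)^α), while J^α T_i((i+1)·h) − J^α T_i(i·h) = h^α / Γ(α+2). (These are the entries ψ_k of the operational matrix P_{αtt} of Theorem 3.2.) -/

import Mathlib

open MeasureTheory Real

/-- The `i`-th sample-and-hold function (SHF) of step `h`: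
`S_i(t) = 1` on `[i·h, (i+1)·h)` and `0` otherwise. -/
noncomputable def shf (h : ℝ) (i : ℕ) (t : ℝ) : ℝ :=
  if (i : ℝ) * h ≤ t ∧ t < ((i : ℝ) + 1) * h then 1 else 0

/-- The `i`-th right-handed triangular function (TF) of step `h`:
`T_i(t) = (t − i·h)/h` on `[i·h, (i+1)·h)` and `0` otherwise. -/
noncomputable def tf (h : ℝ) (i : ℕ) (t : ℝ) : ℝ :=
  if (i : ℝ) * h ≤ t ∧ t < ((i : ℝ) + 1) * h then (t - (i : ℝ) * h) / h else 0

/-- Riemann–Liouville fractional integral of order `α`: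
`J^α f(t) = (1/Γ(α)) ∫₀ᵗ (t − τ)^{α−1} f(τ) dτ`. -/
noncomputable def rlInt (α : ℝ) (f : ℝ → ℝ) (t : ℝ) : ℝ :=
  (1 / Real.Gamma α) * ∫ τ in (0:ℝ)..t, (t - τ) ^ (α - 1) * f τ

/-!
Only the piece `[i·h, (i+1)·h]` of the integration range contributes, and there
`(t - τ)^(α-1) (τ - i·h) = (t - i·h) (t - τ)^(α-1) - (t - τ)^α` integrates in closed form.
At the node `t = (i + c)·h` with `c ≥ 1` this gives
`J^α T_i(t) = h^α / Γ(α+2) · (c^(α+1) - (c + α) (c - 1)^α)`, while `J^α T_i(i·h) = 0`;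
the increments are differences of these values at `c = k + 1` and `c = k`.
-/

open Set

theorem intervalIntegral_eq_of_eqOn_Ioo {E : Type*} [NormedAddCommGroup E] [NormedSpace ℝ E]
    {f g : ℝ → E} {a b c d : ℝ} (hac : a ≤ c) (hcd : c ≤ d) (hdb : d ≤ b)
    (hf : ∀ x ∉ Ioo c d, f x = 0) (hfg : EqOn f g (Ioo c d)) :
    ∫ x in a..b, f x = ∫ x in c..d, g x := by
  have hf' : ∀ x ∉ Ioc a b, f x = 0 := fun x hx ↦
    hf x fun hx' ↦ hx ⟨hac.trans_lt hx'.1, hx'.2.le.trans hdb⟩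
  rw [intervalIntegral.integral_of_le (hac.trans (hcd.trans hdb)),
    intervalIntegral.integral_of_le hcd, setIntegral_eq_integral_of_forall_compl_eq_zero hf',
    ← setIntegral_eq_integral_of_forall_compl_eq_zero hf, integral_Ioc_eq_integral_Ioo,
    setIntegral_congr_fun measurableSet_Ioo hfg]

theorem intervalIntegrable_sub_rpow {γ : ℝ} (hγ : -1 < γ) (t a b : ℝ) :
    IntervalIntegrable (fun τ ↦ (t - τ) ^ γ) volume a b := by
  simpa using
    (intervalIntegral.intervalIntegrable_rpow' (a := t - a) (b := t - b) hγ).comp_sub_left t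

theorem integral_sub_rpow {γ : ℝ} (hγ : -1 < γ) (t a b : ℝ) :
    ∫ τ in a..b, (t - τ) ^ γ = ((t - a) ^ (γ + 1) - (t - b) ^ (γ + 1)) / (γ + 1) := by
  rw [intervalIntegral.integral_comp_sub_left (fun x ↦ x ^ γ) t, integral_rpow (Or.inl hγ)]

theorem integral_sub_rpow_mul_sub {β t a b : ℝ} (hβ : 0 < β) (ha : a ≤ t) (hb : b ≤ t) :
    ∫ τ in a..b, (t - τ) ^ (β - 1) * (τ - a) =
      ((t - a) ^ (β + 1) - (t - b) ^ β * (t - a + β * (b - a))) / (β * (β + 1)) := by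
  have hsplit : EqOn (fun τ ↦ (t - τ) ^ (β - 1) * (τ - a))
      (fun τ ↦ (t - a) * (t - τ) ^ (β - 1) - (t - τ) ^ β) (uIcc a b) := by
    intro τ hτ
    have hτt : 0 ≤ t - τ := sub_nonneg.2 (hτ.2.trans (max_le ha hb))
    have hpow : (t - τ) ^ β = (t - τ) ^ (β - 1) * (t - τ) := by
      simpa using rpow_add_one' hτt (y := β - 1) (by simpa using hβ.ne')
    simp only [hpow]
    ring
  have hβ1 : -1 < β - 1 := by linarith
  rw [intervalIntegral.integral_congr hsplit, intervalIntegral.integral_sub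
      ((intervalIntegrable_sub_rpow hβ1 t a b).const_mul _)
      (intervalIntegrable_sub_rpow (by linarith) t a b),
    intervalIntegral.integral_const_mul, integral_sub_rpow hβ1, integral_sub_rpow (by linarith),
    sub_add_cancel, rpow_add_one' (sub_nonneg.2 ha) (by positivity),
    rpow_add_one' (sub_nonneg.2 hb) (by positivity)]
  field_simp
  ring

theorem tf_eq_zero_of_notMem_Ioo {h τ : ℝ} {i : ℕ}
    (hτ : τ ∉ Ioo ((i : ℝ) * h) (((i : ℝ) + 1) * h)) :
    tf h i τ = 0 := by
  unfold tf
  split_ifs with hmem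
  · obtain rfl : i * h = τ := hmem.1.eq_or_lt.resolve_right fun hlt ↦ hτ ⟨hlt, hmem.2⟩
    simp
  · rfl

theorem Gamma_add_two {α : ℝ} (hα : 0 < α) : Gamma (α + 2) = (α + 1) * α * Gamma α := by
  rw [show α + 2 = α + 1 + 1 by ring, Gamma_add_one (by positivity), Gamma_add_one hα.ne', mul_assoc]

theorem rlInt_tf_natCast_mul_eq_zero (α : ℝ) {h : ℝ} (hh : 0 ≤ h) (i : ℕ) :
    rlInt α (tf h i) ((i : ℝ) * h) = 0 := by
  have hzero : EqOn (fun τ ↦ ((i : ℝ) * h - τ) ^ (α - 1) * tf h i τ) 0 (uIcc 0 ((i : ℝ) * h)) := by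
    intro τ hτ
    rw [uIcc_of_le (by positivity)] at hτ
    simp [tf_eq_zero_of_notMem_Ioo fun hmem : τ ∈ Ioo _ _ ↦ hmem.1.not_ge hτ.2]
  simp [rlInt, intervalIntegral.integral_congr hzero]

theorem rlInt_tf_natCast_add_mul {α h c : ℝ} (hα : 0 < α) (hh : 0 < h) (hc : 1 ≤ c) (i : ℕ) :
    rlInt α (tf h i) (((i : ℝ) + c) * h) =
      h ^ α / Gamma (α + 2) * (c ^ (α + 1) - (c + α) * (c - 1) ^ α) := by
  set t := ((i : ℝ) + c) * h
  have hpiece : ∫ τ in (0 : ℝ)..t, (t - τ) ^ (α - 1) * tf h i τ =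
      ∫ τ in ((i : ℝ) * h)..(((i : ℝ) + 1) * h), (t - τ) ^ (α - 1) * (τ - i * h) / h :=
    intervalIntegral_eq_of_eqOn_Ioo (by positivity) (by nlinarith) (by nlinarith)
      (fun τ hτ ↦ by simp [tf_eq_zero_of_notMem_Ioo hτ])
      (fun τ hτ ↦ by simp [tf, hτ.1.le, hτ.2, mul_div_assoc])
  have hta : t - i * h = c * h := by ring
  have htb : t - (i + 1) * h = (c - 1) * h := by ring
  rw [rlInt, hpiece, intervalIntegral.integral_div,
    integral_sub_rpow_mul_sub hα (by nlinarith) (by nlinarith), hta, htb,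
    mul_rpow (by linarith) hh.le, mul_rpow (by linarith) hh.le, rpow_add_one hh.ne',
    Gamma_add_two hα]
  have hΓ := (Gamma_pos_of_pos hα).ne'
  field_simp
  ring

/-- Increments of nodal values of `J^α T_i`: the entries `ψ_k` of `P_{αtt}`. -/
theorem rlInt_tf_node_increment (α h : ℝ) (hα : 0 < α) (hh : 0 < h) (i j k : ℕ)
    (hij : i + 1 ≤ j) (hk : k = j - i) :
    rlInt α (tf h i) (((j : ℝ) + 1) * h) - rlInt α (tf h i) ((j : ℝ) * h) =
      h ^ α / Real.Gamma (α + 2) *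
        (((k : ℝ) + 1) ^ (α + 1) - ((k : ℝ) + 1 + α) * (k : ℝ) ^ α - (k : ℝ) ^ (α + 1) +
          ((k : ℝ) + α) * ((k : ℝ) - 1) ^ α) ∧
    rlInt α (tf h i) (((i : ℝ) + 1) * h) - rlInt α (tf h i) ((i : ℝ) * h) =
      h ^ α / Real.Gamma (α + 2) := by
  obtain rfl : j = i + k := by omega
  have hk1 : (1 : ℝ) ≤ k := by exact_mod_cast (by omega : 1 ≤ k)
  refine ⟨?_, ?_⟩
  · rw [show ((↑(i + k) : ℝ) + 1) * h = (i + (k + 1)) * h by push_cast; ring,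
      show ((↑(i + k) : ℝ)) * h = (i + k) * h by push_cast; ring,
      rlInt_tf_natCast_add_mul hα hh (by linarith) i, rlInt_tf_natCast_add_mul hα hh hk1 i,
      add_sub_cancel_right]
    ring
  · rw [rlInt_tf_natCast_add_mul hα hh le_rfl i, rlInt_tf_natCast_mul_eq_zero α hh.le i]
    simp [zero_rpow hα.ne']
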